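/- arXiv:2411.08339 — 3 statements merged into one kernel-verified Lean document; each statement's English description precedes it below -/
import Mathlib

section
/- For all integers i ≥ 1 and j ≥ i, we have C(j,i)/2^j ≤ C(2i,i)/2^{2i}, where C(j,i) denotes the binomial coefficient; that is, the maximum of C(j,i)/2^j over integers j ≥ i is attained at j = 2i. -/
/-!
Since `C(n+1,i) (n+1-i) = C(n,i) (n+1)`, passing from `C(n,i)/2^n` to `C(n+1,i)/2^(n+1)` multiplies
by `(n+1) / (2(n+1-i))`, which is at least `1` for `n < 2i` and at most `1` for `n ≥ 2i`.
So `n ↦ C(n,i)/2^n` increases up to `n = 2i` and decreases afterwards.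
-/

namespace Nat

theorem two_mul_choose_le_choose_succ {n i : ℕ} (h : n < 2 * i) :
    2 * n.choose i ≤ (n + 1).choose i := by
  rcases lt_or_ge n i with hni | hin
  · simp [choose_eq_zero_of_lt hni]
  refine le_of_mul_le_mul_right ?_ (show 0 < n + 1 - i by omega)
  calc 2 * n.choose i * (n + 1 - i) = n.choose i * (2 * (n + 1 - i)) := by ring
    _ ≤ n.choose i * (n + 1) := Nat.mul_le_mul_left _ (by omega)
    _ = (n + 1).choose i * (n + 1 - i) := choose_mul_succ_eq n i

theorem choose_succ_le_two_mul_choose {n i : ℕ} (h : 2 * i ≤ n) :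
    (n + 1).choose i ≤ 2 * n.choose i := by
  refine le_of_mul_le_mul_right ?_ (show 0 < n + 1 - i by omega)
  calc (n + 1).choose i * (n + 1 - i) = n.choose i * (n + 1) := (choose_mul_succ_eq n i).symm
    _ ≤ n.choose i * (2 * (n + 1 - i)) := Nat.mul_le_mul_left _ (by omega)
    _ = 2 * n.choose i * (n + 1 - i) := by ring

theorem monotoneOn_choose_div_two_pow (i : ℕ) :
    MonotoneOn (fun n : ℕ => (n.choose i : ℝ) / 2 ^ n) (Set.Iic (2 * i)) := by
  refine monotoneOn_of_le_succ Set.ordConnected_Iic fun n _ _ hsucc => ?_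
  have h : (2 * n.choose i : ℝ) ≤ (n + 1).choose i :=
    mod_cast two_mul_choose_le_choose_succ (Order.succ_le_iff.1 hsucc)
  rw [Order.succ_eq_add_one, div_le_div_iff₀ (by positivity) (by positivity), pow_succ]
  calc (n.choose i : ℝ) * (2 ^ n * 2) = 2 * n.choose i * 2 ^ n := by ring
    _ ≤ (n + 1).choose i * 2 ^ n := by gcongr

theorem antitoneOn_choose_div_two_pow (i : ℕ) :
    AntitoneOn (fun n : ℕ => (n.choose i : ℝ) / 2 ^ n) (Set.Ici (2 * i)) := by
  refine antitoneOn_nat_Ici_of_succ_le fun n hn => ?_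
  have h : ((n + 1).choose i : ℝ) ≤ 2 * n.choose i := mod_cast choose_succ_le_two_mul_choose hn
  rw [div_le_div_iff₀ (by positivity) (by positivity), pow_succ]
  calc ((n + 1).choose i : ℝ) * 2 ^ n ≤ 2 * n.choose i * 2 ^ n := by gcongr
    _ = n.choose i * (2 ^ n * 2) := by ring

end Nat

theorem choose_div_pow_le_general (i j : ℕ) :
    (j.choose i : ℝ) / 2 ^ j ≤ ((2 * i).choose i : ℝ) / 2 ^ (2 * i) := by
  rcases le_total j (2 * i) with h | h
  · exact Nat.monotoneOn_choose_div_two_pow i h Set.self_mem_Iic h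
  · exact Nat.antitoneOn_choose_div_two_pow i Set.self_mem_Ici h h

/-- For integers `i ≥ 1` and `j ≥ i`, `C(j,i)/2^j ≤ C(2i,i)/2^(2i)`. -/
theorem choose_div_pow_le (i j : ℕ) (hi : 1 ≤ i) (hj : i ≤ j) :
    (j.choose i : ℝ) / 2 ^ j ≤ ((2 * i).choose i : ℝ) / 2 ^ (2 * i) :=
  choose_div_pow_le_general i j
end

section
/- For every integer i ≥ 1, the central binomial coefficient satisfies C(2i,i)/2^{2i} < 1/√(π·i). -/
/-!
With `a n = C(2n, n) / 4 ^ n`, the `n`-th partial Wallis product is `W n = 1 / ((2n + 1) a n ^ 2)`,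
and comparing `∫ sin ^ (2n + 1)` with `∫ sin ^ (2n)` gives `W n ≥ (2n + 1) / (2n + 2) · π / 2`.
Hence `a n ^ 2 ≤ 4 (n + 1) / (π (2n + 1) ^ 2) < 1 / (π n)`, the last step being `4n(n + 1) < (2n + 1) ^ 2`.
-/

open Real Real.Wallis Nat

theorem centralBinom_div_four_pow_sq_eq_inv_W (n : ℕ) :
    ((centralBinom n : ℝ) / 4 ^ n) ^ 2 = ((2 * n + 1) * W n)⁻¹ := by
  have hfac : (n ! : ℝ) ≠ 0 := by positivity
  rw [W_eq_factorial_ratio, centralBinom_eq_two_mul_choose,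
    Nat.cast_choose ℝ (by omega : n ≤ 2 * n), show 2 * n - n = n by omega]
  field_simp
  rw [← pow_mul, show (4 : ℝ) = 2 ^ 2 by norm_num, ← pow_mul]
  ring_nf

theorem centralBinom_div_four_pow_sq_le (n : ℕ) :
    ((centralBinom n : ℝ) / 4 ^ n) ^ 2 ≤ 4 * (n + 1) / (π * (2 * n + 1) ^ 2) := by
  have hW := W_pos n
  rw [centralBinom_div_four_pow_sq_eq_inv_W, ← one_div,
    div_le_div_iff₀ (by positivity) (by positivity)]
  have hle := le_W n
  rw [_root_.div_mul_div_comm, div_le_iff₀ (by positivity)] at hle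
  nlinarith

theorem centralBinom_div_four_pow_sq_lt {n : ℕ} (hn : n ≠ 0) :
    ((centralBinom n : ℝ) / 4 ^ n) ^ 2 < 1 / (π * n) := by
  refine (centralBinom_div_four_pow_sq_le n).trans_lt ?_
  have : (0 : ℝ) < n := by positivity
  rw [div_lt_div_iff₀ (by positivity) (by positivity)]
  nlinarith [pi_pos]

/-- For every integer `i ≥ 1`, the central binomial coefficient satisfies
`C(2i,i)/2^(2i) < 1/√(π i)`. -/
theorem central_binom_lt (i : ℕ) (hi : 1 ≤ i) :
    ((2 * i).choose i : ℝ) / 2 ^ (2 * i) < 1 / Real.sqrt (Real.pi * i) := by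
  rw [pow_mul, show (2 : ℝ) ^ 2 = 4 by norm_num, ← centralBinom_eq_two_mul_choose,
    one_div, ← sqrt_inv, ← one_div]
  exact lt_sqrt_of_sq_lt (centralBinom_div_four_pow_sq_lt (by omega))
end

section
/- Let P be a set of n ≥ 5 points in ℝ² in general position with a triangular convex hull, and let T be a triangulation of P. Then at most one of the three hull points of P has degree 3 in T. -/
open scoped Classical

noncomputable section

/-- `P` is in general position: no three points of `P` are collinear. -/
def GenPos (P : Finset (ℝ × ℝ)) : Prop :=
  ∀ p ∈ P, ∀ q ∈ P, ∀ r ∈ P, p ≠ q → p ≠ r → q ≠ r →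
    ¬ Collinear ℝ ({p, q, r} : Set (ℝ × ℝ))

/-- `G` is a plane graph on `P`: edges are drawn as straight segments, and the
open segments of any two distinct edges are disjoint. -/
def IsPlaneGraph (P : Finset (ℝ × ℝ)) (G : SimpleGraph P) : Prop :=
  ∀ a b c d : P, G.Adj a b → G.Adj c d → s(a, b) ≠ s(c, d) →
    openSegment ℝ (a : ℝ × ℝ) (b : ℝ × ℝ) ∩ openSegment ℝ (c : ℝ × ℝ) (d : ℝ × ℝ) = ∅

/-- The collection `𝒢(P)` of all plane graphs on `P`. -/
def planeGraphs (P : Finset (ℝ × ℝ)) : Finset (SimpleGraph P) :=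
  Finset.univ.filter (IsPlaneGraph P)

/-- `pg(P)`, the number of plane graphs on `P`. -/
def pg (P : Finset (ℝ × ℝ)) : ℕ := (planeGraphs P).card

/-- `v_i(G)`, the number of vertices of degree `i` in `G`. -/
def vcount (P : Finset (ℝ × ℝ)) (G : SimpleGraph P) (i : ℕ) : ℕ :=
  (Finset.univ.filter fun p : P => G.degree p = i).card

/-- `v̂_i(P)`, the expected number of degree-`i` vertices in a uniformly random
plane graph on `P`. -/
def vhat (P : Finset (ℝ × ℝ)) (i : ℕ) : ℝ :=
  (∑ G ∈ planeGraphs P, (vcount P G i : ℝ)) / (pg P : ℝ)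

/-- The hull points of `P`: extreme points of the convex hull of `P`. -/
def hullPoints (P : Finset (ℝ × ℝ)) : Set (ℝ × ℝ) :=
  (convexHull ℝ (P : Set (ℝ × ℝ))).extremePoints ℝ

/-- `P` has a triangular convex hull: exactly three hull points. -/
def TriHull (P : Finset (ℝ × ℝ)) : Prop :=
  (hullPoints P).ncard = 3

/-- `p` is an internal point of `P`. -/
def Internal (P : Finset (ℝ × ℝ)) (p : ℝ × ℝ) : Prop :=
  p ∈ P ∧ p ∉ hullPoints P

/-- The graph obtained from `G` by adding the edge `pq`. -/
def addEdge (P : Finset (ℝ × ℝ)) (G : SimpleGraph P) (p q : P) : SimpleGraph P :=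
  G ⊔ SimpleGraph.fromEdgeSet {s(p, q)}

/-- `q` is visible from `p` in `G`: `pq` is not an edge of `G` and adding it
again yields a plane graph. -/
def Visible (P : Finset (ℝ × ℝ)) (G : SimpleGraph P) (p q : P) : Prop :=
  p ≠ q ∧ ¬ G.Adj p q ∧ IsPlaneGraph P (addEdge P G p q)

/-- The visibility of `p` in `G`: the number of points visible from `p`. -/
def visibility (P : Finset (ℝ × ℝ)) (G : SimpleGraph P) (p : P) : ℕ :=
  (Finset.univ.filter fun q : P => Visible P G p q).card

/-- A triangulation of `P`: a plane graph to which no edge can be added so that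
the result is still a plane graph. -/
def IsTriangulation (P : Finset (ℝ × ℝ)) (T : SimpleGraph P) : Prop :=
  IsPlaneGraph P T ∧
    ∀ p q : P, p ≠ q → ¬ T.Adj p q → ¬ IsPlaneGraph P (addEdge P T p q)

/-- `v_0^△(G)`: the number of isolated internal vertices of `G`. -/
def v0tri (P : Finset (ℝ × ℝ)) (G : SimpleGraph P) : ℕ :=
  (Finset.univ.filter fun p : P => G.degree p = 0 ∧ Internal P (p : ℝ × ℝ)).card

/-- `v̂_0^△(P)`: expected number of isolated internal vertices in a random
plane graph on `P`. -/
def vhat0tri (P : Finset (ℝ × ℝ)) : ℝ :=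
  (∑ G ∈ planeGraphs P, (v0tri P G : ℝ)) / (pg P : ℝ)

/-- `pg^△(n)`: the minimum number of plane graphs over all sets of `n` points
in general position with a triangular convex hull. -/
def pgTri (n : ℕ) : ℕ :=
  sInf {m | ∃ P : Finset (ℝ × ℝ), P.card = n ∧ GenPos P ∧ TriHull P ∧ pg P = m}

/-- orientation determinant -/
def ori (a b c : ℝ × ℝ) : ℝ := (b.1 - a.1) * (c.2 - a.2) - (b.2 - a.2) * (c.1 - a.1)

lemma ori_cyc (a b c : ℝ × ℝ) : ori a b c = ori b c a := by simp only [ori]; ring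

lemma ori_swap (a b c : ℝ × ℝ) : ori a b c = - ori b a c := by simp only [ori]; ring

lemma ori_self₁ (a c : ℝ × ℝ) : ori a a c = 0 := by simp [ori]

lemma ori_self₂ (a b : ℝ × ℝ) : ori a b a = 0 := by simp only [ori]; ring

lemma ori_self₃ (a b : ℝ × ℝ) : ori a b b = 0 := by simp only [ori]; ring

lemma collinear_of_ori {a b c : ℝ × ℝ} (h : ori a b c = 0) :
    Collinear ℝ ({a, b, c} : Set (ℝ × ℝ)) := by
  rcases eq_or_ne a b with rfl | hab
  · have : ({a, a, c} : Set (ℝ × ℝ)) = {a, c} := by simp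
    rw [this]; exact collinear_pair ℝ a c
  have hmem : a ∈ ({a, b, c} : Set (ℝ × ℝ)) := by simp
  rw [collinear_iff_of_mem hmem]
  refine ⟨b - a, ?_⟩
  rintro p (rfl | rfl | rfl)
  · exact ⟨0, by simp⟩
  · exact ⟨1, by simp⟩
  · rcases eq_or_ne b.1 a.1 with h1 | h1
    · rcases eq_or_ne b.2 a.2 with h2 | h2
      · exact absurd (Prod.ext h1 h2) (Ne.symm hab)
      · refine ⟨(p.2 - a.2) / (b.2 - a.2), ?_⟩
        have hb : b.2 - a.2 ≠ 0 := sub_ne_zero.2 h2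
        have hori : (b.1 - a.1) * (p.2 - a.2) - (b.2 - a.2) * (p.1 - a.1) = 0 := h
        apply Prod.ext <;> simp [Prod.smul_def, smul_eq_mul] <;> field_simp <;> nlinarith [hori]
    · refine ⟨(p.1 - a.1) / (b.1 - a.1), ?_⟩
      have hb : b.1 - a.1 ≠ 0 := sub_ne_zero.2 h1
      have hori : (b.1 - a.1) * (p.2 - a.2) - (b.2 - a.2) * (p.1 - a.1) = 0 := h
      apply Prod.ext <;> simp [Prod.smul_def, smul_eq_mul] <;> field_simp <;> nlinarith [hori]

/-- GenPos gives nonzero orientation for distinct triples -/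
lemma gp_ori {P : Finset (ℝ × ℝ)} (hgp : GenPos P) {a b c : ℝ × ℝ}
    (ha : a ∈ P) (hb : b ∈ P) (hc : c ∈ P)
    (h1 : a ≠ b) (h2 : a ≠ c) (h3 : b ≠ c) : ori a b c ≠ 0 :=
  fun h => hgp a ha b hb c hc h1 h2 h3 (collinear_of_ori h)

/-- ori is affine in the third argument along segments -/
lemma ori_affine₃ (A B u v : ℝ × ℝ) (t : ℝ) :
    ori A B ((1 - t) • u + t • v) = (1 - t) * ori A B u + t * ori A B v := by
  simp only [ori, Prod.smul_fst, Prod.smul_snd, Prod.fst_add, Prod.snd_add, smul_eq_mul]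
  ring

lemma ori_comb₃ (A B u v w : ℝ × ℝ) {a b c : ℝ} (h : a + b + c = 1) :
    ori A B (a • u + b • v + c • w) = a * ori A B u + b * ori A B v + c * ori A B w := by
  have hc : c = 1 - a - b := by linarith
  subst hc
  simp only [ori, Prod.smul_fst, Prod.smul_snd, Prod.fst_add, Prod.snd_add, smul_eq_mul]
  ring

lemma ori_comb₂ (A C u v w : ℝ × ℝ) {a b c : ℝ} (h : a + b + c = 1) :
    ori A (a • u + b • v + c • w) C = a * ori A u C + b * ori A v C + c * ori A w C := by
  have hc : c = 1 - a - b := by linarith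
  subst hc
  simp only [ori, Prod.smul_fst, Prod.smul_snd, Prod.fst_add, Prod.snd_add, smul_eq_mul]
  ring

lemma ori_comb₁ (B C u v w : ℝ × ℝ) {a b c : ℝ} (h : a + b + c = 1) :
    ori (a • u + b • v + c • w) B C = a * ori u B C + b * ori v B C + c * ori w B C := by
  have hc : c = 1 - a - b := by linarith
  subst hc
  simp only [ori, Prod.smul_fst, Prod.smul_snd, Prod.fst_add, Prod.snd_add, smul_eq_mul]
  ring

/-- parallel decomposition in the plane -/
lemma exists_smul_of_cross {u w : ℝ × ℝ} (hu : u ≠ 0)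
    (h : u.1 * w.2 - u.2 * w.1 = 0) : ∃ s : ℝ, w = s • u := by
  rcases eq_or_ne u.1 0 with h1 | h1
  · have h2 : u.2 ≠ 0 := by
      intro h2; exact hu (Prod.ext h1 h2)
    refine ⟨w.2 / u.2, ?_⟩
    apply Prod.ext <;> simp [Prod.smul_def, smul_eq_mul] <;> field_simp <;> nlinarith [h]
  · refine ⟨w.1 / u.1, ?_⟩
    apply Prod.ext <;> simp [Prod.smul_def, smul_eq_mul] <;> field_simp <;> nlinarith [h]

lemma ori_eq_cross (a b c : ℝ × ℝ) :
    ori a b c = (b - a).1 * (c - a).2 - (b - a).2 * (c - a).1 := by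
  simp [ori]

lemma addEdge_adj {P : Finset (ℝ × ℝ)} (G : SimpleGraph P) (p q a b : P) :
    (addEdge P G p q).Adj a b ↔ G.Adj a b ∨ (s(a, b) = s(p, q) ∧ a ≠ b) := by
  simp [addEdge, SimpleGraph.fromEdgeSet_adj]

/-- If two distinct vertices are non adjacent in a triangulation, some edge crosses
the open segment between them. -/
lemma blocked {P : Finset (ℝ × ℝ)} {T : SimpleGraph P} (hT : IsTriangulation P T)
    {a b : P} (hab : a ≠ b) (hnadj : ¬ T.Adj a b) :
    ∃ e f : P, T.Adj e f ∧
      (openSegment ℝ (a : ℝ × ℝ) (b : ℝ × ℝ) ∩ openSegment ℝ (e : ℝ × ℝ) (f : ℝ × ℝ)).Nonempty := by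
  have h := hT.2 a b hab hnadj
  rw [IsPlaneGraph] at h
  push_neg at h
  obtain ⟨c, d, c', d', h1, h2, hne, hint⟩ := h
  rw [addEdge_adj] at h1 h2
  have hint' : (openSegment ℝ (c:ℝ×ℝ) d ∩ openSegment ℝ (c':ℝ×ℝ) d').Nonempty := by
    first
      | exact hint
      | exact Set.nonempty_iff_ne_empty.mpr hint
  clear hint
  rename' hint' => hint
  -- helper : segments of pairs Sym2-equal to s(a,b) are openSegment a b
  have seg_eq : ∀ u v : P, s(u, v) = s(a, b) →
      openSegment ℝ (u : ℝ × ℝ) (v : ℝ × ℝ) = openSegment ℝ (a : ℝ × ℝ) (b : ℝ × ℝ) := by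
    intro u v huv
    rw [Sym2.eq_iff] at huv
    rcases huv with ⟨rfl, rfl⟩ | ⟨rfl, rfl⟩
    · rfl
    · exact openSegment_symm ℝ _ _
  rcases h1 with h1 | ⟨h1s, h1ne⟩
  · rcases h2 with h2 | ⟨h2s, h2ne⟩
    · exact absurd (hT.1 c d c' d' h1 h2 hne) (Set.nonempty_iff_ne_empty.mp hint)
    · refine ⟨c, d, h1, ?_⟩
      rw [Set.inter_comm, seg_eq c' d' h2s] at hint
      exact hint
  · rcases h2 with h2 | ⟨h2s, h2ne⟩
    · refine ⟨c', d', h2, ?_⟩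
      rw [seg_eq c d h1s] at hint
      exact hint
    · exact absurd (h1s.trans h2s.symm) hne

/-- If segment ab crosses no edge of T (other than itself as a pair), then ab is an edge. -/
lemma add_ok {P : Finset (ℝ × ℝ)} {T : SimpleGraph P} (hT : IsTriangulation P T)
    {a b : P} (hab : a ≠ b)
    (h : ∀ e f : P, T.Adj e f → s(e, f) ≠ s(a, b) →
      openSegment ℝ (a : ℝ × ℝ) (b : ℝ × ℝ) ∩ openSegment ℝ (e : ℝ × ℝ) (f : ℝ × ℝ) = ∅) :
    T.Adj a b := by
  by_contra hn
  obtain ⟨e, f, hef, hint⟩ := blocked hT hab hn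
  have : s(e, f) ≠ s(a, b) := by
    intro hs
    rw [Sym2.eq_iff] at hs
    rcases hs with ⟨rfl, rfl⟩ | ⟨rfl, rfl⟩
    · exact hn hef
    · exact hn hef.symm
  rw [h e f hef this] at hint
  exact Set.not_nonempty_empty hint

lemma bary {p q r z : ℝ × ℝ} (hpq : p ≠ q) (hpr : p ≠ r) (hqr : q ≠ r)
    (hz : z ∈ convexHull ℝ ({p, q, r} : Set (ℝ × ℝ))) :
    ∃ a b c : ℝ, 0 ≤ a ∧ 0 ≤ b ∧ 0 ≤ c ∧ a + b + c = 1 ∧ z = a • p + b • q + c • r := by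
  have hset : ({p, q, r} : Set (ℝ × ℝ)) = (({p, q, r} : Finset (ℝ × ℝ)) : Set (ℝ × ℝ)) := by
    simp
  rw [hset, Finset.convexHull_eq] at hz
  obtain ⟨w, hw0, hw1, hwz⟩ := hz
  have hpqr : p ∉ ({q, r} : Finset (ℝ × ℝ)) := by simp [hpq, hpr]
  have hqr' : q ∉ ({r} : Finset (ℝ × ℝ)) := by simp [hqr]
  have hsum : ∑ y ∈ ({p, q, r} : Finset (ℝ × ℝ)), w y = w p + w q + w r := by
    rw [Finset.sum_insert hpqr, Finset.sum_insert hqr', Finset.sum_singleton]; ring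
  refine ⟨w p, w q, w r, hw0 p (by simp), hw0 q (by simp), hw0 r (by simp),
    by rw [← hsum]; exact hw1, ?_⟩
  rw [Finset.centerMass_eq_of_sum_1 _ _ hw1] at hwz
  rw [← hwz, Finset.sum_insert hpqr, Finset.sum_insert hqr', Finset.sum_singleton]
  simp [add_assoc]

lemma mem_openSegment' {x y m : ℝ × ℝ} (h : m ∈ openSegment ℝ x y) :
    ∃ t : ℝ, 0 < t ∧ t < 1 ∧ m = (1 - t) • x + t • y := by
  rw [openSegment_eq_image] at h
  obtain ⟨t, ⟨h0, h1⟩, rfl⟩ := h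
  exact ⟨t, h0, h1, rfl⟩

lemma ori_openSegment {A B x y m : ℝ × ℝ} (h : m ∈ openSegment ℝ x y)
    (hx : ori A B x = 0) (hy : ori A B y = 0) : ori A B m = 0 := by
  obtain ⟨t, _, _, rfl⟩ := mem_openSegment' h
  rw [ori_affine₃, hx, hy]; ring

/-- a hull edge (all points on one side) is an edge of any triangulation -/
lemma hull_edge {P : Finset (ℝ × ℝ)} {T : SimpleGraph P} (hT : IsTriangulation P T)
    (hgp : GenPos P) (a b : P) (hab : (a : ℝ × ℝ) ≠ (b : ℝ × ℝ))
    (hside : ∀ w : P, 0 ≤ ori (a : ℝ × ℝ) (b : ℝ × ℝ) (w : ℝ × ℝ)) : T.Adj a b := by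
  have hab' : a ≠ b := fun h => hab (by rw [h])
  apply add_ok hT hab'
  intro e f hef hs
  rw [Set.eq_empty_iff_forall_notMem]
  rintro m ⟨hm1, hm2⟩
  have hmab : ori (a : ℝ × ℝ) b m = 0 :=
    ori_openSegment hm1 (ori_self₂ _ _) (ori_self₃ _ _)
  obtain ⟨s, hs0, hs1, rfl⟩ := mem_openSegment' hm2
  rw [ori_affine₃] at hmab
  have hefne : (e : ℝ × ℝ) ≠ (f : ℝ × ℝ) := fun h => hef.ne (Subtype.ext h)
  have he0 : ori (a : ℝ × ℝ) b e = 0 := by nlinarith [hside e, hside f]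
  have hf0 : ori (a : ℝ × ℝ) b f = 0 := by nlinarith [hside e, hside f]
  have heab : (e : ℝ × ℝ) = a ∨ (e : ℝ × ℝ) = b := by
    by_contra hc
    push_neg at hc
    exact gp_ori hgp a.2 b.2 e.2 hab (Ne.symm hc.1) (Ne.symm hc.2) he0
  have hfab : (f : ℝ × ℝ) = a ∨ (f : ℝ × ℝ) = b := by
    by_contra hc
    push_neg at hc
    exact gp_ori hgp a.2 b.2 f.2 hab (Ne.symm hc.1) (Ne.symm hc.2) hf0
  apply hs
  rw [Sym2.eq_iff]
  rcases heab with he | he <;> rcases hfab with hf | hf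
  · exact absurd (Subtype.ext (he.trans hf.symm)) hef.ne
  · exact Or.inl ⟨Subtype.ext he, Subtype.ext hf⟩
  · exact Or.inr ⟨Subtype.ext he, Subtype.ext hf⟩
  · exact absurd (Subtype.ext (he.trans hf.symm)) hef.ne

/-- Extremal lemma: nothing of `P` lies strictly on the `v`-side of the line
through the neighbours `n₁ n₃` of the degree-3 vertex `v`. -/
lemma Eprime {P : Finset (ℝ × ℝ)} {T : SimpleGraph P} (hT : IsTriangulation P T)
    (hgp : GenPos P) (v n₁ n₂ n₃ : P)
    (hdeg : ∀ w : P, T.Adj v w ↔ w = n₁ ∨ w = n₂ ∨ w = n₃)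
    (σ : ℝ) (hσdef : σ = ori (n₁ : ℝ × ℝ) (n₃ : ℝ × ℝ) (v : ℝ × ℝ))
    (hn2 : σ * ori (n₁ : ℝ × ℝ) (n₃ : ℝ × ℝ) (n₂ : ℝ × ℝ) < 0)
    (hlt : ∀ z : P, z ≠ v → σ * ori (n₁ : ℝ × ℝ) (n₃ : ℝ × ℝ) (z : ℝ × ℝ) < σ * σ) :
    ∀ z : P, z ≠ v → σ * ori (n₁ : ℝ × ℝ) (n₃ : ℝ × ℝ) (z : ℝ × ℝ) ≤ 0 := by
  by_contra hcon
  push_neg at hcon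
  obtain ⟨z₀, hz₀v, hz₀⟩ := hcon
  set L : P → ℝ := fun w => σ * ori (n₁ : ℝ × ℝ) (n₃ : ℝ × ℝ) (w : ℝ × ℝ) with hL
  have hSne : (Finset.univ.filter fun w : P => w ≠ v).Nonempty :=
    ⟨z₀, by simp [hz₀v]⟩
  obtain ⟨z, hzS, hmax⟩ := Finset.exists_max_image _ L hSne
  have hzv : z ≠ v := by simpa using hzS
  have hzpos : 0 < L z := lt_of_lt_of_le hz₀ (hmax z₀ (by simp [hz₀v]))
  have hvz : (v : ℝ × ℝ) ≠ (z : ℝ × ℝ) := fun h => hzv (Subtype.ext h.symm)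
  have hnadj : ¬ T.Adj v z := by
    intro h
    rcases (hdeg z).1 h with h1 | h1 | h1
    · rw [hL] at hzpos; rw [h1] at hzpos
      simp only [ori_self₂, mul_zero] at hzpos
      exact lt_irrefl _ hzpos
    · rw [hL] at hzpos; rw [h1] at hzpos
      exact absurd hzpos (not_lt.2 (le_of_lt hn2))
    · rw [hL] at hzpos; rw [h1] at hzpos
      simp only [ori_self₃, mul_zero] at hzpos
      exact lt_irrefl _ hzpos
  obtain ⟨e, f, hef, m_pt, hm1, hm2⟩ := blocked hT (Ne.symm hzv) hnadj
  obtain ⟨t, ht0, ht1, rfl⟩ := mem_openSegment' hm1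
  obtain ⟨s, hs0, hs1, heq⟩ := mem_openSegment' hm2
  have helper : ∀ (g h' : P) (u : ℝ), T.Adj g h' → 0 < u → u < 1 →
      ((1 - t) • (v : ℝ × ℝ) + t • (z : ℝ × ℝ) = (1 - u) • (g : ℝ × ℝ) + u • (h' : ℝ × ℝ)) →
      L h' ≤ L g → False := by
    intro g h' u hadj hu0 hu1 hequ hle
    have hx := congrArg Prod.fst hequ
    have hy := congrArg Prod.snd hequ
    simp only [Prod.fst_add, Prod.snd_add, Prod.smul_fst, Prod.smul_snd, smul_eq_mul] at hx hy
    -- value of the functional at the crossing point, two ways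
    have E1 : ori (n₁ : ℝ × ℝ) n₃ ((1 - t) • (v : ℝ × ℝ) + t • (z : ℝ × ℝ))
        = (1 - t) * ori (n₁ : ℝ × ℝ) n₃ v + t * ori (n₁ : ℝ × ℝ) n₃ z := ori_affine₃ _ _ _ _ _
    have E2 : ori (n₁ : ℝ × ℝ) n₃ ((1 - u) • (g : ℝ × ℝ) + u • (h' : ℝ × ℝ))
        = (1 - u) * ori (n₁ : ℝ × ℝ) n₃ g + u * ori (n₁ : ℝ × ℝ) n₃ h' := ori_affine₃ _ _ _ _ _
    rw [hequ, E2] at E1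
    -- g ≠ v
    have hgv : g ≠ v := by
      intro hgveq
      rw [hgveq] at hx hy
      have hori0 : u * ori (v : ℝ × ℝ) (z : ℝ × ℝ) (h' : ℝ × ℝ) = 0 := by
        simp only [ori]
        linear_combination ((z : ℝ × ℝ).2 - (v : ℝ × ℝ).2) * hx
          - ((z : ℝ × ℝ).1 - (v : ℝ × ℝ).1) * hy
      have hori : ori (v : ℝ × ℝ) (z : ℝ × ℝ) (h' : ℝ × ℝ) = 0 := by
        rcases mul_eq_zero.1 hori0 with h | h
        · exact absurd h (ne_of_gt hu0)
        · exact h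
      have hh'v : (h' : ℝ × ℝ) ≠ (v : ℝ × ℝ) := by
        rw [← hgveq]
        exact fun h => hadj.ne' (Subtype.ext h)
      have hh'z : (h' : ℝ × ℝ) ≠ (z : ℝ × ℝ) := by
        intro h
        rw [hgveq, Subtype.ext h] at hadj
        exact hnadj hadj
      exact gp_ori hgp v.2 z.2 h'.2 hvz (Ne.symm hh'v) (Ne.symm hh'z) hori
    -- maximality contradiction
    have hzlt : σ * ori (n₁ : ℝ × ℝ) n₃ (z : ℝ × ℝ) < σ * σ := hlt z hzv
    have hmaxg : σ * ori (n₁ : ℝ × ℝ) n₃ (g : ℝ × ℝ) ≤ σ * ori (n₁ : ℝ × ℝ) n₃ (z : ℝ × ℝ) := by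
      have := hmax g (by simp [hgv])
      rw [hL] at this
      exact this
    have hle' : σ * ori (n₁ : ℝ × ℝ) n₃ (h' : ℝ × ℝ) ≤ σ * ori (n₁ : ℝ × ℝ) n₃ (g : ℝ × ℝ) := by
      rw [hL] at hle
      exact hle
    have E3 : (1 - u) * (σ * ori (n₁ : ℝ × ℝ) n₃ (g : ℝ × ℝ))
        + u * (σ * ori (n₁ : ℝ × ℝ) n₃ (h' : ℝ × ℝ))
        = (1 - t) * (σ * σ) + t * (σ * ori (n₁ : ℝ × ℝ) n₃ (z : ℝ × ℝ)) := by
      have h4 : σ * ori (n₁ : ℝ × ℝ) n₃ (v : ℝ × ℝ) = σ * σ := by rw [← hσdef]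
      linear_combination σ * E1 + (1 - t) * h4
    nlinarith [mul_nonneg hu0.le (sub_nonneg.2 hle'),
      mul_pos (sub_pos.2 ht1) (sub_pos.2 hzlt)]
  rcases le_total (L e) (L f) with hc | hc
  · exact helper f e (1 - s) hef.symm (by linarith) (by linarith)
      (by rw [heq]; module) hc
  · exact helper e f s hef hs0 hs1 heq hc

/-- link lemma: the segment joining the two "outer" neighbours of the degree 3
vertex `v` is an edge of the triangulation. -/
lemma link {P : Finset (ℝ × ℝ)} {T : SimpleGraph P} (hT : IsTriangulation P T)
    (hgp : GenPos P) (v n₁ n₂ n₃ : P)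
    (hdeg : ∀ w : P, T.Adj v w ↔ w = n₁ ∨ w = n₂ ∨ w = n₃)
    (σ : ℝ) (hσdef : σ = ori (n₁ : ℝ × ℝ) (n₃ : ℝ × ℝ) (v : ℝ × ℝ)) (hσ0 : σ ≠ 0)
    (hside : ∀ z : P, z ≠ v → σ * ori (n₁ : ℝ × ℝ) (n₃ : ℝ × ℝ) (z : ℝ × ℝ) ≤ 0)
    (hCC : 0 < ori (v : ℝ × ℝ) (n₂ : ℝ × ℝ) (n₁ : ℝ × ℝ) * ori (v : ℝ × ℝ) (n₂ : ℝ × ℝ) (n₃ : ℝ × ℝ)) :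
    T.Adj n₁ n₃ := by
  have hvn₁ : (v : ℝ × ℝ) ≠ (n₁ : ℝ × ℝ) := by
    intro h; rw [hσdef, ← h] at hσ0; exact hσ0 (ori_self₂ _ _)
  have hvn₃ : (v : ℝ × ℝ) ≠ (n₃ : ℝ × ℝ) := by
    intro h; rw [hσdef, ← h] at hσ0; exact hσ0 (ori_self₃ _ _)
  have h13 : (n₁ : ℝ × ℝ) ≠ (n₃ : ℝ × ℝ) := by
    intro h; rw [hσdef, h, ori_self₁] at hσ0; exact hσ0 rfl
  have hvn₂ : (v : ℝ × ℝ) ≠ (n₂ : ℝ × ℝ) := by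
    intro h
    rw [← h, ori_self₁, zero_mul] at hCC
    exact lt_irrefl _ hCC
  apply add_ok hT (fun h => h13 (by rw [h]))
  intro e f hef hs
  rw [Set.eq_empty_iff_forall_notMem]
  rintro m ⟨hm1, hm2⟩
  obtain ⟨t, ht0, ht1, hmeq⟩ := mem_openSegment' hm1
  -- the case where one endpoint of the crossing edge is v itself
  have vcase : ∀ w : P, T.Adj v w → m ∈ openSegment ℝ (v : ℝ × ℝ) (w : ℝ × ℝ) → False := by
    intro w hadj hm
    rcases (hdeg w).1 hadj with h1 | h1 | h1
    · -- w = n₁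
      have hor : ori (v : ℝ × ℝ) (n₁ : ℝ × ℝ) m = 0 := by
        rw [h1] at hm
        exact ori_openSegment hm (ori_self₂ _ _) (ori_self₃ _ _)
      rw [hmeq, ori_affine₃, ori_self₃, mul_zero, zero_add] at hor
      rcases mul_eq_zero.1 hor with h | h
      · linarith
      · exact gp_ori hgp v.2 n₁.2 n₃.2 hvn₁ hvn₃ h13 h
    · -- w = n₂
      have hor : ori (v : ℝ × ℝ) (n₂ : ℝ × ℝ) m = 0 := by
        rw [h1] at hm
        exact ori_openSegment hm (ori_self₂ _ _) (ori_self₃ _ _)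
      rw [hmeq, ori_affine₃] at hor
      rcases mul_pos_iff.1 hCC with ⟨hA, hB⟩ | ⟨hA, hB⟩
      · nlinarith
      · nlinarith
    · -- w = n₃
      have hor : ori (v : ℝ × ℝ) (n₃ : ℝ × ℝ) m = 0 := by
        rw [h1] at hm
        exact ori_openSegment hm (ori_self₂ _ _) (ori_self₃ _ _)
      rw [hmeq, ori_affine₃, ori_self₃, mul_zero, add_zero] at hor
      rcases mul_eq_zero.1 hor with h | h
      · linarith
      · exact gp_ori hgp v.2 n₃.2 n₁.2 hvn₃ hvn₁ (Ne.symm h13) h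
  by_cases hev : e = v
  · exact vcase f (by rwa [hev] at hef) (by rwa [hev] at hm2)
  by_cases hfv : f = v
  · exact vcase e (by rw [hfv] at hef; exact hef.symm)
      (by rw [hfv] at hm2; rwa [openSegment_symm] at hm2)
  -- both endpoints differ from v : they must lie on the line n₁ n₃
  have hLm : ori (n₁ : ℝ × ℝ) (n₃ : ℝ × ℝ) m = 0 :=
    ori_openSegment hm1 (ori_self₂ _ _) (ori_self₃ _ _)
  obtain ⟨s, hs0, hs1, hmeq2⟩ := mem_openSegment' hm2
  rw [hmeq2, ori_affine₃] at hLm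
  have hsege : σ * ori (n₁ : ℝ × ℝ) (n₃ : ℝ × ℝ) (e : ℝ × ℝ) ≤ 0 := hside e hev
  have hsegf : σ * ori (n₁ : ℝ × ℝ) (n₃ : ℝ × ℝ) (f : ℝ × ℝ) ≤ 0 := hside f hfv
  have hσLm := congrArg (fun x => σ * x) hLm
  simp only [mul_zero, mul_add, ← mul_assoc] at hσLm
  have he0 : ori (n₁ : ℝ × ℝ) (n₃ : ℝ × ℝ) (e : ℝ × ℝ) = 0 := by
    rcases mul_eq_zero.1 (show σ * ori (n₁ : ℝ × ℝ) (n₃ : ℝ × ℝ) (e : ℝ × ℝ) = 0 by nlinarith)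
      with h | h
    · exact absurd h hσ0
    · exact h
  have hf0 : ori (n₁ : ℝ × ℝ) (n₃ : ℝ × ℝ) (f : ℝ × ℝ) = 0 := by
    rcases mul_eq_zero.1 (show σ * ori (n₁ : ℝ × ℝ) (n₃ : ℝ × ℝ) (f : ℝ × ℝ) = 0 by nlinarith)
      with h | h
    · exact absurd h hσ0
    · exact h
  have hefne : (e : ℝ × ℝ) ≠ (f : ℝ × ℝ) := fun h => hef.ne (Subtype.ext h)
  have heab : (e : ℝ × ℝ) = n₁ ∨ (e : ℝ × ℝ) = n₃ := by
    by_contra hc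
    push_neg at hc
    exact gp_ori hgp n₁.2 n₃.2 e.2 h13 (Ne.symm hc.1) (Ne.symm hc.2) he0
  have hfab : (f : ℝ × ℝ) = n₁ ∨ (f : ℝ × ℝ) = n₃ := by
    by_contra hc
    push_neg at hc
    exact gp_ori hgp n₁.2 n₃.2 f.2 h13 (Ne.symm hc.1) (Ne.symm hc.2) hf0
  apply hs
  rw [Sym2.eq_iff]
  rcases heab with he | he <;> rcases hfab with hf | hf
  · exact absurd (Subtype.ext (he.trans hf.symm)) hef.ne
  · exact Or.inl ⟨Subtype.ext he, Subtype.ext hf⟩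
  · exact Or.inr ⟨Subtype.ext he, Subtype.ext hf⟩
  · exact absurd (Subtype.ext (he.trans hf.symm)) hef.ne

lemma hull_setup {P : Finset (ℝ × ℝ)} (hhull : TriHull P) {p q : ℝ × ℝ}
    (hp : p ∈ hullPoints P) (hq : q ∈ hullPoints P) (hpq : p ≠ q) :
    ∃ r, r ∈ P ∧ r ≠ p ∧ r ≠ q ∧
      ∀ w ∈ P, w ∈ convexHull ℝ ({p, q, r} : Set (ℝ × ℝ)) := by
  have hsubP : hullPoints P ⊆ (P : Set (ℝ × ℝ)) := extremePoints_convexHull_subset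
  have hfin : (hullPoints P).Finite := P.finite_toSet.subset hsubP
  -- third hull point
  have hex : ∃ r ∈ hullPoints P, r ∉ ({p, q} : Set (ℝ × ℝ)) := by
    by_contra hc
    push_neg at hc
    have hsub : hullPoints P ⊆ {p, q} := hc
    have := Set.ncard_le_ncard hsub ((Set.finite_singleton _).insert _)
    rw [hhull, Set.ncard_pair hpq] at this
    omega
  obtain ⟨r, hrH, hrpq⟩ := hex
  have hrp : r ≠ p := fun h => hrpq (by simp [h])
  have hrq : r ≠ q := fun h => hrpq (by simp [h])
  refine ⟨r, hsubP hrH, hrp, hrq, ?_⟩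
  -- hullPoints P = {p, q, r}
  have hsub3 : ({p, q, r} : Set (ℝ × ℝ)) ⊆ hullPoints P := by
    rintro w (rfl | rfl | rfl) <;> assumption
  have hcard3 : ({p, q, r} : Set (ℝ × ℝ)).ncard = 3 := by
    rw [Set.ncard_insert_of_notMem (by simp [hpq, Ne.symm hrp])
      ((Set.finite_singleton _).insert _),
      Set.ncard_pair (Ne.symm hrq)]
  have hHeq : ({p, q, r} : Set (ℝ × ℝ)) = hullPoints P :=
    Set.eq_of_subset_of_ncard_le hsub3 (by rw [hhull, hcard3]) hfin
  -- Krein-Milman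
  have hcomp : IsCompact (convexHull ℝ (P : Set (ℝ × ℝ))) :=
    P.finite_toSet.isCompact_convexHull ℝ
  have hKM := closure_convexHull_extremePoints hcomp (convex_convexHull ℝ _)
  have hclosed : IsClosed (convexHull ℝ (hullPoints P)) := hfin.isClosed_convexHull ℝ
  have hCH : convexHull ℝ (hullPoints P) = convexHull ℝ (P : Set (ℝ × ℝ)) := by
    have : hullPoints P = Set.extremePoints ℝ ((convexHull ℝ) (P : Set (ℝ × ℝ))) := rfl
    rw [← hKM, ← this, hclosed.closure_eq]
  intro w hw
  rw [hHeq, hCH]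
  exact subset_convexHull ℝ _ hw

lemma star3 {P : Finset (ℝ × ℝ)} {T : SimpleGraph P} (v a b : P) (hab : a ≠ b)
    (hd : T.degree v = 3) (ha : T.Adj v a) (hb : T.Adj v b) :
    ∃ x : P, T.Adj v x ∧ x ≠ a ∧ x ≠ b ∧
      ∀ w : P, T.Adj v w ↔ w = a ∨ w = b ∨ w = x := by
  classical
  have haN : a ∈ T.neighborFinset v := (SimpleGraph.mem_neighborFinset _ _ _).2 ha
  have hbN : b ∈ T.neighborFinset v := (SimpleGraph.mem_neighborFinset _ _ _).2 hb
  have hcard : (T.neighborFinset v).card = 3 := hd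
  have hbN' : b ∈ (T.neighborFinset v).erase a := Finset.mem_erase.2 ⟨Ne.symm hab, hbN⟩
  have hc2 : ((T.neighborFinset v).erase a).card = 2 := by
    rw [Finset.card_erase_of_mem haN, hcard]
  have hc1 : (((T.neighborFinset v).erase a).erase b).card = 1 := by
    rw [Finset.card_erase_of_mem hbN', hc2]
  obtain ⟨x, hx⟩ := Finset.card_eq_one.1 hc1
  have hxmem : x ∈ ((T.neighborFinset v).erase a).erase b := by
    rw [hx]; exact Finset.mem_singleton_self x
  have hxb : x ≠ b := (Finset.mem_erase.1 hxmem).1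
  have hxa : x ≠ a := (Finset.mem_erase.1 (Finset.mem_erase.1 hxmem).2).1
  have hxN : x ∈ T.neighborFinset v := (Finset.mem_erase.1 (Finset.mem_erase.1 hxmem).2).2
  have hNeq : T.neighborFinset v = {a, b, x} := by
    have h1 : insert b (((T.neighborFinset v).erase a).erase b) = (T.neighborFinset v).erase a :=
      Finset.insert_erase hbN'
    have h2 : insert a ((T.neighborFinset v).erase a) = T.neighborFinset v :=
      Finset.insert_erase haN
    rw [← h2, ← h1, hx]
  refine ⟨x, (SimpleGraph.mem_neighborFinset _ _ _).1 hxN, hxa, hxb, ?_⟩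
  intro w
  rw [← SimpleGraph.mem_neighborFinset, hNeq]
  simp

lemma Eprime' {P : Finset (ℝ × ℝ)} {T : SimpleGraph P} (hT : IsTriangulation P T)
    (hgp : GenPos P) (v n₁ n₂ n₃ : P)
    (hdeg : ∀ w : P, T.Adj v w ↔ w = n₁ ∨ w = n₂ ∨ w = n₃)
    (pp qq rr : ℝ × ℝ)
    (coords : ∀ w : P, ∃ α β γ : ℝ, 0 ≤ α ∧ 0 ≤ β ∧ 0 ≤ γ ∧ α + β + γ = 1 ∧
      (w : ℝ × ℝ) = α • pp + β • qq + γ • rr)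
    (σ l₂ l₃ : ℝ)
    (hv : (v : ℝ × ℝ) = pp)
    (hl1 : ori (n₁ : ℝ × ℝ) (n₃ : ℝ × ℝ) pp = σ)
    (hl2 : ori (n₁ : ℝ × ℝ) (n₃ : ℝ × ℝ) qq = l₂)
    (hl3 : ori (n₁ : ℝ × ℝ) (n₃ : ℝ × ℝ) rr = l₃)
    (hσ0 : σ ≠ 0) (h2 : σ * l₂ ≤ 0) (h3 : σ * l₃ ≤ 0)
    (hvp : ∀ w : P, (w : ℝ × ℝ) = pp → w = v)
    (hn2 : σ * ori (n₁ : ℝ × ℝ) (n₃ : ℝ × ℝ) (n₂ : ℝ × ℝ) < 0) :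
    ∀ z : P, z ≠ v → σ * ori (n₁ : ℝ × ℝ) (n₃ : ℝ × ℝ) (z : ℝ × ℝ) ≤ 0 := by
  apply Eprime hT hgp v n₁ n₂ n₃ hdeg σ (by rw [hv, hl1]) hn2
  intro z hz
  obtain ⟨α, β, γ, hα0, hβ0, hγ0, hsum, hrep⟩ := coords z
  have hval : ori (n₁ : ℝ × ℝ) (n₃ : ℝ × ℝ) (z : ℝ × ℝ) = α * σ + β * l₂ + γ * l₃ := by
    rw [hrep, ori_comb₃ _ _ _ _ _ hsum, hl1, hl2, hl3]
  have hα1 : α < 1 := by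
    rcases lt_or_ge α 1 with h | h
    · exact h
    · exfalso
      have hα : α = 1 := by linarith
      have hβ : β = 0 := by linarith
      have hγ : γ = 0 := by linarith
      apply hz
      apply hvp
      rw [hrep, hα, hβ, hγ]
      simp
  rw [hval]
  have hσσ : 0 < σ * σ := mul_self_pos.2 hσ0
  nlinarith [mul_nonneg hβ0 (neg_nonneg.2 h2), mul_nonneg hγ0 (neg_nonneg.2 h3),
    mul_pos (by linarith : (0:ℝ) < 1 - α) hσσ]


set_option maxHeartbeats 2000000 in
lemma main_aux2 {P : Finset (ℝ × ℝ)} (hn : 5 ≤ P.card) (hgp : GenPos P)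
    {T : SimpleGraph P} (hT : IsTriangulation P T) (p q : P) (r : ℝ × ℝ) (hr : r ∈ P)
    (hrp : r ≠ (p : ℝ × ℝ)) (hrq : r ≠ (q : ℝ × ℝ)) (hpq : (p : ℝ × ℝ) ≠ (q : ℝ × ℝ))
    (hhull : ∀ w ∈ P, w ∈ convexHull ℝ ({(p : ℝ × ℝ), (q : ℝ × ℝ), r} : Set (ℝ × ℝ)))
    (hD : 0 < ori (p : ℝ × ℝ) (q : ℝ × ℝ) r)
    (hdp : T.degree p = 3) (hdq : T.degree q = 3) : False := by
  classical
  set D := ori (p : ℝ × ℝ) (q : ℝ × ℝ) r with hDdef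
  set rS : P := ⟨r, hr⟩ with hrSdef
  have hrSval : (rS : ℝ × ℝ) = r := rfl
  -- coordinates
  have hcoords : ∀ w : P, ∃ a b c : ℝ, 0 ≤ a ∧ 0 ≤ b ∧ 0 ≤ c ∧ a + b + c = 1 ∧
      (w : ℝ × ℝ) = a • (p : ℝ × ℝ) + b • (q : ℝ × ℝ) + c • r ∧
      ori (p : ℝ × ℝ) (q : ℝ × ℝ) (w : ℝ × ℝ) = c * D ∧
      ori (q : ℝ × ℝ) r (w : ℝ × ℝ) = a * D ∧
      ori r (p : ℝ × ℝ) (w : ℝ × ℝ) = b * D := by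
    intro w
    obtain ⟨a, b, c, ha, hb, hc, hsum, hrep⟩ :=
      bary hpq (Ne.symm hrp) (Ne.symm hrq) (hhull w w.2)
    refine ⟨a, b, c, ha, hb, hc, hsum, hrep, ?_, ?_, ?_⟩
    · rw [hrep, ori_comb₃ _ _ _ _ _ hsum, ori_self₂, ori_self₃, hDdef]; ring
    · rw [hrep, ori_comb₃ _ _ _ _ _ hsum, ori_self₂, ori_self₃, hDdef]
      simp only [ori]; ring
    · rw [hrep, ori_comb₃ _ _ _ _ _ hsum, ori_self₂, ori_self₃, hDdef]
      simp only [ori]; ring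
  -- hull edges
  have hApq : T.Adj p q := by
    apply hull_edge hT hgp p q hpq
    intro w
    obtain ⟨a, b, c, ha, hb, hc, hsum, hrep, h1, h2, h3⟩ := hcoords w
    rw [h1]; positivity
  have hAqr : T.Adj q rS := by
    apply hull_edge hT hgp q rS (by rw [hrSval]; exact Ne.symm hrq)
    intro w
    obtain ⟨a, b, c, ha, hb, hc, hsum, hrep, h1, h2, h3⟩ := hcoords w
    rw [hrSval, h2]; positivity
  have hArp : T.Adj rS p := by
    apply hull_edge hT hgp rS p (by rw [hrSval]; exact hrp)
    intro w
    obtain ⟨a, b, c, ha, hb, hc, hsum, hrep, h1, h2, h3⟩ := hcoords w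
    rw [hrSval, h3]; positivity
  -- stars
  have hqrS : q ≠ rS := fun h => hrq (by rw [h, hrSval])
  have hprS : p ≠ rS := fun h => hrp (by rw [h, hrSval])
  obtain ⟨xS, hAxp, hxq, hxr, hdeg_p⟩ := star3 p q rS hqrS hdp hApq hArp.symm
  obtain ⟨yS, hAyq, hyp, hyr, hdeg_q⟩ := star3 q p rS hprS hdq hApq.symm hAqr
  -- values and distinctness
  have hxp : xS ≠ p := fun h => (T.irrefl (by rwa [h] at hAxp))
  have hyq : yS ≠ q := fun h => (T.irrefl (by rwa [h] at hAyq))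
  have hxvp : (xS : ℝ × ℝ) ≠ (p : ℝ × ℝ) := fun h => hxp (Subtype.ext h)
  have hxvq : (xS : ℝ × ℝ) ≠ (q : ℝ × ℝ) := fun h => hxq (Subtype.ext h)
  have hxvr : (xS : ℝ × ℝ) ≠ r := fun h => hxr (Subtype.ext h)
  have hyvp : (yS : ℝ × ℝ) ≠ (p : ℝ × ℝ) := fun h => hyp (Subtype.ext h)
  have hyvq : (yS : ℝ × ℝ) ≠ (q : ℝ × ℝ) := fun h => hyq (Subtype.ext h)
  have hyvr : (yS : ℝ × ℝ) ≠ r := fun h => hyr (Subtype.ext h)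
  -- coordinates of x with positivity
  obtain ⟨a, b, c, ha0, hb0, hc0, hsx, hxrep, hx1, hx2, hx3⟩ := hcoords xS
  have ha : 0 < a := by
    rcases lt_or_eq_of_le ha0 with h | h
    · exact h
    · exfalso
      exact gp_ori hgp q.2 hr xS.2 (Ne.symm hrq) hxvq.symm hxvr.symm (by rw [hx2, ← h]; ring)
  have hb : 0 < b := by
    rcases lt_or_eq_of_le hb0 with h | h
    · exact h
    · exfalso
      exact gp_ori hgp hr p.2 xS.2 hrp (fun hh => hxvr hh.symm) hxvp.symm (by rw [hx3, ← h]; ring)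
  have hc : 0 < c := by
    rcases lt_or_eq_of_le hc0 with h | h
    · exact h
    · exfalso
      exact gp_ori hgp p.2 q.2 xS.2 hpq hxvp.symm hxvq.symm (by rw [hx1, ← h]; ring)
  -- coordinates of y with positivity
  obtain ⟨a', b', c', ha0', hb0', hc0', hsy, hyrep, hy1, hy2, hy3⟩ := hcoords yS
  have ha' : 0 < a' := by
    rcases lt_or_eq_of_le ha0' with h | h
    · exact h
    · exfalso
      exact gp_ori hgp q.2 hr yS.2 (Ne.symm hrq) hyvq.symm hyvr.symm (by rw [hy2, ← h]; ring)
  have hb' : 0 < b' := by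
    rcases lt_or_eq_of_le hb0' with h | h
    · exact h
    · exfalso
      exact gp_ori hgp hr p.2 yS.2 hrp (fun hh => hyvr hh.symm) hyvp.symm (by rw [hy3, ← h]; ring)
  have hc' : 0 < c' := by
    rcases lt_or_eq_of_le hc0' with h | h
    · exact h
    · exfalso
      exact gp_ori hgp p.2 q.2 yS.2 hpq hyvp.symm hyvq.symm (by rw [hy1, ← h]; ring)
  -- plain coordinates w.r.t. (p,q,r) and (q,p,r)
  have hcoP : ∀ w : P, ∃ α β γ : ℝ, 0 ≤ α ∧ 0 ≤ β ∧ 0 ≤ γ ∧ α + β + γ = 1 ∧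
      (w : ℝ × ℝ) = α • (p : ℝ × ℝ) + β • (q : ℝ × ℝ) + γ • r := by
    intro w
    obtain ⟨α, β, γ, h1, h2, h3, h4, h5, _⟩ := hcoords w
    exact ⟨α, β, γ, h1, h2, h3, h4, h5⟩
  have hcoQ : ∀ w : P, ∃ α β γ : ℝ, 0 ≤ α ∧ 0 ≤ β ∧ 0 ≤ γ ∧ α + β + γ = 1 ∧
      (w : ℝ × ℝ) = α • (q : ℝ × ℝ) + β • (p : ℝ × ℝ) + γ • r := by
    intro w
    obtain ⟨α, β, γ, h1, h2, h3, h4, h5, _⟩ := hcoords w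
    exact ⟨β, α, γ, h2, h1, h3, by linarith, by rw [h5]; module⟩
  have hDne : D ≠ 0 := ne_of_gt hD
  -- values of the functional along the line q -- x
  have hA : ori (q : ℝ × ℝ) (xS : ℝ × ℝ) (p : ℝ × ℝ) = c * D := by
    rw [hxrep, ori_comb₂ _ _ _ _ _ hsx, ori_self₃, ori_self₁, hDdef]
    simp only [ori]; ring
  have hAr : ori (q : ℝ × ℝ) (xS : ℝ × ℝ) r = -(a * D) := by
    rw [hxrep, ori_comb₂ _ _ _ _ _ hsx, ori_self₃, ori_self₁, hDdef]
    simp only [ori]; ring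
  have hcD : 0 < c * D := mul_pos hc hD
  have haD : 0 < a * D := mul_pos ha hD
  have hbD : 0 < b * D := mul_pos hb hD
  -- E' for p along the line q -- x
  have Epx : ∀ z : P, z ≠ p → (c * D) * ori (q : ℝ × ℝ) (xS : ℝ × ℝ) (z : ℝ × ℝ) ≤ 0 := by
    apply Eprime' hT hgp p q rS xS hdeg_p (p : ℝ × ℝ) (q : ℝ × ℝ) r hcoP (c * D) 0 (-(a * D))
      rfl hA (ori_self₂ _ _) hAr (ne_of_gt hcD) (by simp) (by nlinarith)
      (fun w h => Subtype.ext h)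
    rw [hrSval, hAr]
    nlinarith
  -- link edge q -- x
  have Lqx : T.Adj q xS := by
    apply link hT hgp p q rS xS hdeg_p (c * D) hA.symm (ne_of_gt hcD) Epx
    rw [hrSval]
    have h1 : ori (p : ℝ × ℝ) r (q : ℝ × ℝ) = -D := by rw [hDdef]; simp only [ori]; ring
    have h2 : ori (p : ℝ × ℝ) r (xS : ℝ × ℝ) = -(b * D) := by
      rw [hxrep, ori_comb₃ _ _ _ _ _ hsx, ori_self₂, ori_self₃, h1]; ring
    rw [h1, h2]
    nlinarith
  -- x = y
  have hxy : xS = yS := by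
    by_contra hxy
    have hxyv : (xS : ℝ × ℝ) ≠ (yS : ℝ × ℝ) := fun h => hxy (Subtype.ext h)
    -- values along the line p -- y
    have hC : ori (p : ℝ × ℝ) (yS : ℝ × ℝ) (q : ℝ × ℝ) = -(c' * D) := by
      rw [hyrep, ori_comb₂ _ _ _ _ _ hsy, ori_self₁, ori_self₃, hDdef]
      simp only [ori]; ring
    have hCr : ori (p : ℝ × ℝ) (yS : ℝ × ℝ) r = b' * D := by
      rw [hyrep, ori_comb₂ _ _ _ _ _ hsy, ori_self₁, ori_self₃, hDdef]
      simp only [ori]; ring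
    have hcD' : 0 < c' * D := mul_pos hc' hD
    have hbD' : 0 < b' * D := mul_pos hb' hD
    have Eqy : ∀ z : P, z ≠ q → (-(c' * D)) * ori (p : ℝ × ℝ) (yS : ℝ × ℝ) (z : ℝ × ℝ) ≤ 0 := by
      apply Eprime' hT hgp q p rS yS hdeg_q (q : ℝ × ℝ) (p : ℝ × ℝ) r hcoQ (-(c' * D)) 0 (b' * D)
        rfl hC (ori_self₂ _ _) hCr (by nlinarith) (by simp) (by nlinarith)
        (fun w h => Subtype.ext h)
      rw [hrSval, hCr]
      nlinarith
    have Lpy : T.Adj p yS := by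
      apply link hT hgp q p rS yS hdeg_q (-(c' * D)) hC.symm (by nlinarith) Eqy
      rw [hrSval]
      have h1 : ori (q : ℝ × ℝ) r (p : ℝ × ℝ) = D := by rw [hDdef]; simp only [ori]; ring
      rw [h1, hy2]
      nlinarith [mul_pos (mul_pos ha' hD) hD]
    -- construct the crossing point of segments q -- x and p -- y
    have hBle := Epx yS hyp
    have hBne : ori (q : ℝ × ℝ) (xS : ℝ × ℝ) (yS : ℝ × ℝ) ≠ 0 :=
      gp_ori hgp q.2 xS.2 yS.2 hxvq.symm hyvq.symm hxyv
    have hB : ori (q : ℝ × ℝ) (xS : ℝ × ℝ) (yS : ℝ × ℝ) < 0 := by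
      rcases lt_or_eq_of_le (by nlinarith : ori (q : ℝ × ℝ) (xS : ℝ × ℝ) (yS : ℝ × ℝ) ≤ 0)
        with h | h
      · exact h
      · exact absurd h hBne
    have hEle := Eqy xS hxq
    have hEne : ori (p : ℝ × ℝ) (yS : ℝ × ℝ) (xS : ℝ × ℝ) ≠ 0 :=
      gp_ori hgp p.2 yS.2 xS.2 hyvp.symm hxvp.symm hxyv.symm
    have hE : 0 < ori (p : ℝ × ℝ) (yS : ℝ × ℝ) (xS : ℝ × ℝ) := by
      rcases lt_or_eq_of_le (by nlinarith : 0 ≤ ori (p : ℝ × ℝ) (yS : ℝ × ℝ) (xS : ℝ × ℝ))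
        with h | h
      · exact h
      · exact absurd h.symm hEne
    set B := ori (q : ℝ × ℝ) (xS : ℝ × ℝ) (yS : ℝ × ℝ) with hBdef
    set t : ℝ := (c * D) / (c * D - B) with htdef
    have hden : 0 < c * D - B := by linarith
    have ht0 : 0 < t := div_pos hcD hden
    have ht1 : t < 1 := (div_lt_one hden).2 (by linarith)
    set m : ℝ × ℝ := (1 - t) • (p : ℝ × ℝ) + t • (yS : ℝ × ℝ) with hmdef
    have hm_py : m ∈ openSegment ℝ (p : ℝ × ℝ) (yS : ℝ × ℝ) := by
      rw [openSegment_eq_image]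
      exact ⟨t, ⟨ht0, ht1⟩, rfl⟩
    have hl1m : ori (q : ℝ × ℝ) (xS : ℝ × ℝ) m = 0 := by
      have hden' : c * D - B ≠ 0 := ne_of_gt hden
      rw [hmdef, ori_affine₃, hA, ← hBdef, htdef]
      field_simp
      ring
    have hu : (xS : ℝ × ℝ) - (q : ℝ × ℝ) ≠ 0 := sub_ne_zero.2 hxvq
    have hcross : ((xS : ℝ × ℝ) - (q : ℝ × ℝ)).1 * (m - (q : ℝ × ℝ)).2
        - ((xS : ℝ × ℝ) - (q : ℝ × ℝ)).2 * (m - (q : ℝ × ℝ)).1 = 0 := by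
      simp only [Prod.fst_sub, Prod.snd_sub]
      simp only [ori] at hl1m
      linarith
    obtain ⟨s, hs⟩ := exists_smul_of_cross hu hcross
    have hmq : m = (1 - s) • (q : ℝ × ℝ) + s • (xS : ℝ × ℝ) := by
      have h1 : m = s • ((xS : ℝ × ℝ) - (q : ℝ × ℝ)) + (q : ℝ × ℝ) := sub_eq_iff_eq_add.1 hs
      rw [h1]
      module
    have hl2m : ori (p : ℝ × ℝ) (yS : ℝ × ℝ) m = 0 :=
      ori_openSegment hm_py (ori_self₂ _ _) (ori_self₃ _ _)
    rw [hmq, ori_affine₃, hC] at hl2m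
    -- hl2m : (1-s) * (-(c'*D)) + s * ori p y x = 0
    have hs0 : 0 < s := by nlinarith
    have hs1 : s < 1 := by nlinarith
    have hm_qx : m ∈ openSegment ℝ (q : ℝ × ℝ) (xS : ℝ × ℝ) := by
      rw [openSegment_eq_image]
      exact ⟨s, ⟨hs0, hs1⟩, hmq.symm⟩
    have hsym : s(q, xS) ≠ s(p, yS) := by
      intro h
      rw [Sym2.eq_iff] at h
      rcases h with ⟨h1, _⟩ | ⟨h1, _⟩
      · exact hpq (congrArg _ h1).symm
      · exact hyq h1.symm
    have hplanar := hT.1 q xS p yS Lqx Lpy hsym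
    rw [Set.eq_empty_iff_forall_notMem] at hplanar
    exact hplanar m ⟨hm_qx, hm_py⟩
  -- final step : use both E' conclusions along the line x -- r
  rw [← hxy] at hdeg_q
  have hdeg_p' : ∀ w : P, T.Adj p w ↔ w = xS ∨ w = q ∨ w = rS := by
    intro w; rw [hdeg_p w]; tauto
  have hdeg_q' : ∀ w : P, T.Adj q w ↔ w = xS ∨ w = p ∨ w = rS := by
    intro w; rw [hdeg_q w]; tauto
  -- values of the functional along the line x -- r
  have hB1 : ori (xS : ℝ × ℝ) (rS : ℝ × ℝ) (p : ℝ × ℝ) = b * D := by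
    rw [hrSval, hxrep, ori_comb₁ _ _ _ _ _ hsx, ori_self₂, ori_self₁, hDdef]
    simp only [ori]; ring
  have hB2 : ori (xS : ℝ × ℝ) (rS : ℝ × ℝ) (q : ℝ × ℝ) = -(a * D) := by
    rw [hrSval, hxrep, ori_comb₁ _ _ _ _ _ hsx, ori_self₂, ori_self₁, hDdef]
    simp only [ori]; ring
  have hB3 : ori (xS : ℝ × ℝ) (rS : ℝ × ℝ) r = 0 := by
    rw [hrSval]; exact ori_self₃ _ _
  have E1 : ∀ z : P, z ≠ p → (b * D) * ori (xS : ℝ × ℝ) (rS : ℝ × ℝ) (z : ℝ × ℝ) ≤ 0 := by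
    apply Eprime' hT hgp p xS q rS hdeg_p' (p : ℝ × ℝ) (q : ℝ × ℝ) r hcoP (b * D) (-(a * D)) 0
      rfl hB1 hB2 hB3 (ne_of_gt hbD) (by nlinarith) (by simp)
      (fun w h => Subtype.ext h)
    rw [hB2]
    nlinarith
  have E2 : ∀ z : P, z ≠ q → (-(a * D)) * ori (xS : ℝ × ℝ) (rS : ℝ × ℝ) (z : ℝ × ℝ) ≤ 0 := by
    apply Eprime' hT hgp q xS p rS hdeg_q' (q : ℝ × ℝ) (p : ℝ × ℝ) r hcoQ (-(a * D)) (b * D) 0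
      rfl hB2 hB1 hB3 (by nlinarith) (by nlinarith) (by simp)
      (fun w h => Subtype.ext h)
    rw [hB1]
    nlinarith
  -- a fifth point
  have hns : ¬ (P : Finset (ℝ × ℝ)) ⊆ {(p : ℝ × ℝ), (q : ℝ × ℝ), r, (xS : ℝ × ℝ)} := by
    intro hsub
    have h1 := Finset.card_le_card hsub
    have h2 : ({(p : ℝ × ℝ), (q : ℝ × ℝ), r, (xS : ℝ × ℝ)} : Finset (ℝ × ℝ)).card ≤ 4 := by
      apply le_trans (Finset.card_insert_le _ _)
      have h3 : ({(q : ℝ × ℝ), r, (xS : ℝ × ℝ)} : Finset (ℝ × ℝ)).card ≤ 3 := by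
        apply le_trans (Finset.card_insert_le _ _)
        have h4 : ({r, (xS : ℝ × ℝ)} : Finset (ℝ × ℝ)).card ≤ 2 := by
          apply le_trans (Finset.card_insert_le _ _)
          simp
        omega
      omega
    omega
  obtain ⟨z, hzP, hznot⟩ := Finset.not_subset.1 hns
  simp only [Finset.mem_insert, Finset.mem_singleton, not_or] at hznot
  obtain ⟨hz1, hz2, hz3, hz4⟩ := hznot
  set zS : P := ⟨z, hzP⟩ with hzSdef
  have hzSval : (zS : ℝ × ℝ) = z := rfl
  have hzp : zS ≠ p := fun h => hz1 (by rw [← hzSval, h])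
  have hzq : zS ≠ q := fun h => hz2 (by rw [← hzSval, h])
  have hE1 := E1 zS hzp
  have hE2 := E2 zS hzq
  have hzero : ori (xS : ℝ × ℝ) (rS : ℝ × ℝ) (zS : ℝ × ℝ) = 0 := by nlinarith
  have hxrval : (xS : ℝ × ℝ) ≠ (rS : ℝ × ℝ) := by rw [hrSval]; exact hxvr
  have : False := gp_ori hgp xS.2 hr hzP (by rw [← hrSval]; exact hxrval) (Ne.symm hz4)
    (Ne.symm hz3) (by rw [← hrSval, ← hzSval]; exact hzero)
  exact this


/-- In every triangulation of `n ≥ 5` points in general position with a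
triangular convex hull, at most one hull point has degree 3. -/
theorem at_most_one_hull_deg3 (P : Finset (ℝ × ℝ)) (hn : 5 ≤ P.card)
    (hgp : GenPos P) (hhull : TriHull P)
    (T : SimpleGraph P) (hT : IsTriangulation P T)
    (p q : P) (hp : (p : ℝ × ℝ) ∈ hullPoints P) (hq : (q : ℝ × ℝ) ∈ hullPoints P)
    (hdp : T.degree p = 3) (hdq : T.degree q = 3) :
    p = q := by
  by_contra hne
  have hpqv : (p : ℝ × ℝ) ≠ (q : ℝ × ℝ) := fun h => hne (Subtype.ext h)
  obtain ⟨r, hrP, hrp, hrq, hhull'⟩ := hull_setup hhull hp hq hpqv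
  have hDne : ori (p : ℝ × ℝ) (q : ℝ × ℝ) r ≠ 0 :=
    gp_ori hgp p.2 q.2 hrP hpqv (Ne.symm hrp) (Ne.symm hrq)
  rcases lt_or_gt_of_ne hDne with hlt | hgt
  · apply main_aux2 hn hgp hT q p r hrP hrq hrp (Ne.symm hpqv) ?_ ?_ hdq hdp
    · intro w hw
      have := hhull' w hw
      rwa [Set.insert_comm] at this
    · rw [show ori (q : ℝ × ℝ) (p : ℝ × ℝ) r = - ori (p : ℝ × ℝ) (q : ℝ × ℝ) r
        from ori_swap _ _ _]
      linarith
  · exact main_aux2 hn hgp hT p q r hrP hrp hrq hpqv hhull' hgt hdp hdq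
end
end
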